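/- Linear pruning of good contexts: if C⟨[vₘ→m]D⟩ is a good context (where vₘ is a multiplicative value and the displayed cut is on a multiplicative variable m), then C⟨D⟩ is a good context. -/

import Mathlib

/-- Variables of the ESC: multiplicative or exponential, indexed by names. -/
inductive EVar where
  | mul : ℕ → EVar
  | exp : ℕ → EVar
deriving DecidableEq

/-- ESC terms: variables, abstractions `λx.t`, promotions `!t`,
cuts `[v→x]t`, subtractions `[m▷v,x]t`, derelictions `[e?x]t`. -/
inductive Term where
  | var : EVar → Term
  | lam : EVar → Term → Term
  | bang : Term → Term
  | cut : Term → EVar → Term → Term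
  | sub : EVar → Term → EVar → Term → Term
  | der : EVar → EVar → Term → Term
deriving DecidableEq

namespace Term

def IsValue : Term → Prop
  | var _ => True
  | lam _ _ => True
  | bang _ => True
  | _ => False

/-- Free variables. -/
def fv : Term → Finset EVar
  | var x => {x}
  | lam x t => fv t \ {x}
  | bang t => fv t
  | cut v x t => fv v ∪ (fv t \ {x})
  | sub m v x t => insert m (fv v ∪ (fv t \ {x}))
  | der e x t => insert e (fv t \ {x})

/-- Out variables: variables with at least one occurrence outside all cut values. -/
def ov : Term → Finset EVar
  | var x => {x}
  | lam x t => ov t \ {x}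
  | bang t => ov t
  | cut _ x t => ov t \ {x}
  | sub m v x t => insert m (ov v ∪ (ov t \ {x}))
  | der e x t => insert e (ov t \ {x})

/-- A term is cut-free if it has no cut subterm. -/
def CutFree : Term → Prop
  | var _ => True
  | lam _ t => CutFree t
  | bang t => CutFree t
  | cut _ _ _ => False
  | sub _ v _ t => CutFree v ∧ CutFree t
  | der _ _ t => CutFree t

/-- Cut-freeness up to garbage: for every out cut `[v→x]s`, `x ∉ ov s`. -/
def CutFreeUpToGarbage : Term → Prop
  | var _ => True
  | lam _ t => CutFreeUpToGarbage t
  | bang t => CutFreeUpToGarbage t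
  | cut _ x t => x ∉ ov t ∧ CutFreeUpToGarbage t
  | sub _ v _ t => CutFreeUpToGarbage v ∧ CutFreeUpToGarbage t
  | der _ _ t => CutFreeUpToGarbage t

/-- Number of out cuts (cuts not contained in the value of another cut). -/
def numOutCuts : Term → ℕ
  | var _ => 0
  | lam _ t => numOutCuts t
  | bang t => numOutCuts t
  | cut _ _ t => numOutCuts t + 1
  | sub _ v _ t => numOutCuts v + numOutCuts t
  | der _ _ t => numOutCuts t

/-- The garbage collection function, erasing every cut. -/
def gc : Term → Term
  | var x => var x
  | lam x t => lam x (gc t)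
  | bang t => bang (gc t)
  | cut _ _ t => gc t
  | sub m v x t => sub m (gc v) x (gc t)
  | der e x t => der e x (gc t)

end Term

/-- One-hole contexts for ESC terms. -/
inductive Ctx where
  | hole : Ctx
  | lam : EVar → Ctx → Ctx
  | bang : Ctx → Ctx
  | cutT : Ctx → EVar → Term → Ctx      -- hole inside the cut value: [C→x]t
  | cutC : Term → EVar → Ctx → Ctx      -- [v→x]C
  | subV : EVar → Ctx → EVar → Term → Ctx  -- [m▷C,x]t
  | subC : EVar → Term → EVar → Ctx → Ctx  -- [m▷v,x]C
  | der : EVar → EVar → Ctx → Ctx          -- [e?x]C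

/-- Plugging a term in a context. -/
def plug : Ctx → Term → Term
  | Ctx.hole, s => s
  | Ctx.lam x C, s => Term.lam x (plug C s)
  | Ctx.bang C, s => Term.bang (plug C s)
  | Ctx.cutT C x t, s => Term.cut (plug C s) x t
  | Ctx.cutC v x C, s => Term.cut v x (plug C s)
  | Ctx.subV m C x t, s => Term.sub m (plug C s) x t
  | Ctx.subC m v x C, s => Term.sub m v x (plug C s)
  | Ctx.der e x C, s => Term.der e x (plug C s)

/-- Dominating free variables of a context. -/
def dfv : Ctx → Finset EVar
  | Ctx.hole => ∅
  | Ctx.lam x C => dfv C \ {x}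
  | Ctx.bang C => dfv C
  | Ctx.cutT C _ _ => dfv C
  | Ctx.cutC _ x C => dfv C \ {x}
  | Ctx.subV m C _ _ => insert m (dfv C)
  | Ctx.subC m _ x C => if x ∈ dfv C then insert m (dfv C \ {x}) else dfv C
  | Ctx.der e x C => if x ∈ dfv C then insert e (dfv C \ {x}) else dfv C

mutual
  /-- Good value contexts `V_G ::= ⟨·⟩ | λx.G | !G`. -/
  inductive GoodV : Ctx → Prop
    | hole : GoodV Ctx.hole
    | lam (x : EVar) {C : Ctx} : Good C → GoodV (Ctx.lam x C)
    | bang {C : Ctx} : Good C → GoodV (Ctx.bang C)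

  /-- Good contexts
  `G ::= V_G | [m▷v,x]G | [m▷V_G,x]t | [e?x]G | [v→x]G (x ∉ dfv G)`. -/
  inductive Good : Ctx → Prop
    | val {C : Ctx} : GoodV C → Good C
    | subC (m : EVar) (v : Term) (x : EVar) {C : Ctx} :
        Good C → Good (Ctx.subC m v x C)
    | subV (m : EVar) {C : Ctx} (x : EVar) (t : Term) :
        GoodV C → Good (Ctx.subV m C x t)
    | der (e x : EVar) {C : Ctx} : Good C → Good (Ctx.der e x C)
    | cutC (v : Term) (x : EVar) {C : Ctx} :
        Good C → x ∉ dfv C → Good (Ctx.cutC v x C)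
end


/-- Composition of contexts: plug the second context in the hole of the first. -/
def comp : Ctx → Ctx → Ctx
  | Ctx.hole, D => D
  | Ctx.lam x C, D => Ctx.lam x (comp C D)
  | Ctx.bang C, D => Ctx.bang (comp C D)
  | Ctx.cutT C x t, D => Ctx.cutT (comp C D) x t
  | Ctx.cutC v x C, D => Ctx.cutC v x (comp C D)
  | Ctx.subV m C x t, D => Ctx.subV m (comp C D) x t
  | Ctx.subC m v x C, D => Ctx.subC m v x (comp C D)
  | Ctx.der e x C, D => Ctx.der e x (comp C D)


/-- Multiplicative values: multiplicative variables and abstractions. -/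
def IsMulVal : Term → Prop
  | Term.var (EVar.mul _) => True
  | Term.lam _ _ => True
  | _ => False

/-! Goodness never inspects the value of a cut, and a good cut `[v→y]D` has `y ∉ dfv D`, so
erasing it leaves `dfv` unchanged. Since an enclosing context `C` sees its hole only through
goodness and `dfv`, the side conditions of the cuts of `C` survive the pruning. -/

theorem goodV_lam_iff {x : EVar} {C : Ctx} : GoodV (.lam x C) ↔ Good C :=
  ⟨fun | .lam _ h => h, .lam x⟩

theorem goodV_bang_iff {C : Ctx} : GoodV (.bang C) ↔ Good C :=
  ⟨fun | .bang h => h, .bang⟩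

theorem good_lam_iff {x : EVar} {C : Ctx} : Good (.lam x C) ↔ Good C :=
  ⟨fun | .val h => goodV_lam_iff.1 h, fun h => .val (.lam x h)⟩

theorem good_bang_iff {C : Ctx} : Good (.bang C) ↔ Good C :=
  ⟨fun | .val h => goodV_bang_iff.1 h, fun h => .val (.bang h)⟩

theorem not_good_cutT {C : Ctx} {x : EVar} {t : Term} : ¬ Good (.cutT C x t) :=
  fun | .val h => nomatch h

theorem good_cutC_iff {v : Term} {x : EVar} {C : Ctx} :
    Good (.cutC v x C) ↔ Good C ∧ x ∉ dfv C :=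
  ⟨fun | .val h => nomatch h | .cutC _ _ h hx => ⟨h, hx⟩, fun ⟨h, hx⟩ => .cutC v x h hx⟩

theorem good_subV_iff {m x : EVar} {C : Ctx} {t : Term} : Good (.subV m C x t) ↔ GoodV C :=
  ⟨fun | .val h => nomatch h | .subV _ _ _ h => h, .subV m x t⟩

theorem good_subC_iff {m x : EVar} {v : Term} {C : Ctx} : Good (.subC m v x C) ↔ Good C :=
  ⟨fun | .val h => nomatch h | .subC _ _ _ h => h, .subC m v x⟩

theorem good_der_iff {e x : EVar} {C : Ctx} : Good (.der e x C) ↔ Good C :=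
  ⟨fun | .val h => nomatch h | .der _ _ h => h, .der e x⟩

theorem good_of_good_comp {E : Ctx} : ∀ {C : Ctx}, Good (comp C E) → Good E
  | .hole, h => h
  | .lam _ C, h => good_of_good_comp (C := C) (good_lam_iff.1 h)
  | .bang C, h => good_of_good_comp (C := C) (good_bang_iff.1 h)
  | .cutT _ _ _, h => absurd h not_good_cutT
  | .cutC _ _ C, h => good_of_good_comp (C := C) (good_cutC_iff.1 h).1
  | .subV _ C _ _, h => good_of_good_comp (C := C) (.val (good_subV_iff.1 h))
  | .subC _ _ _ C, h => good_of_good_comp (C := C) (good_subC_iff.1 h)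
  | .der _ _ C, h => good_of_good_comp (C := C) (good_der_iff.1 h)

theorem dfv_comp_congr (C : Ctx) {D D' : Ctx} (h : dfv D = dfv D') :
    dfv (comp C D) = dfv (comp C D') := by
  induction C <;> simp [comp, dfv, *]

theorem dfv_cutC_of_notMem {v : Term} {y : EVar} {D : Ctx} (hy : y ∉ dfv D) :
    dfv (.cutC v y D) = dfv D := by
  simp [dfv, hy]

theorem good_comp_cutC_prune {v : Term} {y : EVar} {D : Ctx} (hy : y ∉ dfv D) (C : Ctx) :
    (GoodV (comp C (.cutC v y D)) → GoodV (comp C D)) ∧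
      (Good (comp C (.cutC v y D)) → Good (comp C D)) := by
  induction C with
  | hole => exact ⟨nofun, fun h => (good_cutC_iff.1 h).1⟩
  | lam x C ih =>
    simp only [comp, goodV_lam_iff, good_lam_iff]
    exact ⟨ih.2, ih.2⟩
  | bang C ih =>
    simp only [comp, goodV_bang_iff, good_bang_iff]
    exact ⟨ih.2, ih.2⟩
  | cutT C x t => exact ⟨nofun, fun h => absurd h not_good_cutT⟩
  | cutC w x C ih =>
    refine ⟨nofun, fun h => ?_⟩
    obtain ⟨hC, hx⟩ := good_cutC_iff.1 h
    rw [dfv_comp_congr C (dfv_cutC_of_notMem hy)] at hx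
    exact good_cutC_iff.2 ⟨ih.2 hC, hx⟩
  | subV m C x t ih => exact ⟨nofun, fun h => good_subV_iff.2 (ih.1 (good_subV_iff.1 h))⟩
  | subC m w x C ih => exact ⟨nofun, fun h => good_subC_iff.2 (ih.2 (good_subC_iff.1 h))⟩
  | der e x C ih => exact ⟨nofun, fun h => good_der_iff.2 (ih.2 (good_der_iff.1 h))⟩

/-- Linear pruning of good contexts: if `C⟨[vₘ→m]D⟩` is good, where `vₘ` is a
multiplicative value and `m` a multiplicative variable, then `C⟨D⟩` is good. -/
theorem good_ctx_linear_pruning (C D : Ctx) (vm : Term) (n : ℕ)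
    (hval : IsMulVal vm)
    (hgood : Good (comp C (Ctx.cutC vm (EVar.mul n) D))) :
    Good (comp C D) := by
  have hcut : EVar.mul n ∉ dfv D := (good_cutC_iff.1 (good_of_good_comp hgood)).2
  exact (good_comp_cutC_prune hcut C).2 hgood
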